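/- Under the hypotheses of the previous identity, with T₁ a (d−m)×m matrix, it follows that T₁ Σ₁⁻¹ v = (T₁ Σ₁ᵀ π*) / (π*ᵀ Σ₁Σ₁ᵀ π*) · (π*ᵀ v). That is, the multiple-regression beta adjustment of the performance-variable drifts equals the single-regression beta with respect to the optimal portfolio times the portfolio's excess return. -/
import Mathlib


open Matrix

/-- (3.18): the multiple-regression beta adjustment `T₁ S1⁻¹ v` equals the
single-regression beta with respect to the optimal portfolio times the
portfolio's excess return. -/
theorem stmt2 {m n : ℕ} (S1 : Matrix (Fin m) (Fin m) ℝ) (hS : IsUnit S1.det)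
    (T₁ : Matrix (Fin n) (Fin m) ℝ)
    (π v : Fin m → ℝ) (k : ℝ) (hk : k ≠ 0)
    (hquad : π ⬝ᵥ ((S1 * S1ᵀ).mulVec π) ≠ 0)
    (hπ : π = k • ((S1 * S1ᵀ)⁻¹.mulVec v)) :
    (T₁ * S1⁻¹).mulVec v
      = ((π ⬝ᵥ v) / (π ⬝ᵥ ((S1 * S1ᵀ).mulVec π))) • ((T₁ * S1ᵀ).mulVec π) := by
  have hQ : IsUnit (S1 * S1ᵀ).det := by
    rw [det_mul, det_transpose]; exact hS.mul hS
  have hQπ : (S1 * S1ᵀ).mulVec π = k • v := by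
    rw [hπ, mulVec_smul, mulVec_mulVec, mul_nonsing_inv _ hQ, one_mulVec]
  have hSτ : S1ᵀ.mulVec π = k • S1⁻¹.mulVec v := by
    have := congrArg (S1⁻¹.mulVec) hQπ
    rwa [mulVec_mulVec, ← Matrix.mul_assoc, nonsing_inv_mul _ hS, Matrix.one_mul,
      mulVec_smul] at this
  have hπv : π ⬝ᵥ ((S1 * S1ᵀ).mulVec π) = k * (π ⬝ᵥ v) := by
    rw [hQπ, dotProduct_smul, smul_eq_mul]
  have hv : π ⬝ᵥ v ≠ 0 := by
    intro h; apply hquad; rw [hπv, h, mul_zero]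
  rw [hπv]
  conv_rhs => rw [← mulVec_mulVec, hSτ, mulVec_smul]
  rw [smul_smul, ← mulVec_mulVec, div_mul_eq_mul_div, mul_comm (π ⬝ᵥ v) k,
    div_self (mul_ne_zero hk hv), one_smul]
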